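/- For every real m > 0, with k = −1/√3, the following limit holds: lim_{ρ→ρ₊(m)⁺} β_m(ρ)²·(4/3 + (θ_m(ρ) + k)²·β_m(ρ)/(1 − β_m(ρ))) = 1/(9·ρ₊(m)²). (In the paper's notation, lim e^{2λ}/α² = 1/(9ρ₊²) at the regular center, where α = 1/β and e^{2λ} = 1 + k² + (θ + k)²/(α − 1); this identifies the parameter X > 0 of a general interior solution with 1/(9ρ₊²) and yields the classification of all cone interior solutions as Lorentzian Hawking–Page solutions.) -/

import Mathlib

noncomputable def Vhp (m ρ : ℝ) : ℝ := ρ ^ 2 + 1 - 2 * m / ρ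

noncomputable def Vhp' (m ρ : ℝ) : ℝ := 2 * ρ + 2 * m / ρ ^ 2

/-- `β_m`, the renormalized self-similar quantity of the Lorentzian Hawking–Page solution. -/
noncomputable def betaHP (m ρ : ℝ) : ℝ :=
  (1 / 3) * (3 / 2 - Real.sqrt (Vhp m ρ) / ρ - Vhp' m ρ / (4 * Real.sqrt (Vhp m ρ)))

/-- `θ_m`, for the + sign of the scalar field (`k = −1/√3`). -/
noncomputable def thetaHP (m ρ : ℝ) : ℝ :=
  Real.sqrt 3 * ρ * (Vhp' m ρ - 2 * Real.sqrt (Vhp m ρ)) /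
    (4 * Vhp m ρ + ρ * Vhp' m ρ - 6 * ρ * Real.sqrt (Vhp m ρ))

/-!
Put `N = 4V + ρV' - 6ρ√V` (the denominator of `θ`) and `M = 4V + ρV' + 6ρ√V`. Because
`ρV' + V = 3ρ² + 1`, one has `(ρV' - 2V)² = NM - 12V`, and with `β = -N/(12ρ√V)` and
`1 - β = M/(12ρ√V)` the quantity collapses to `N / (9ρ²M)` for `ρ > ρ₊`. As `V(ρ₊) = 0`, both `N` and `M`
are continuous at `ρ₊` with value `3ρ₊² + 1 ≠ 0`, whence the limit `1 / (9ρ₊²)`.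
-/

open Filter Topology

noncomputable def hpForm (c m ρ : ℝ) : ℝ :=
  4 * Vhp m ρ + ρ * Vhp' m ρ + c * ρ * Real.sqrt (Vhp m ρ)

lemma Vhp_eq_div {m ρ : ℝ} (hρ : ρ ≠ 0) : Vhp m ρ = (ρ ^ 3 + ρ - 2 * m) / ρ := by
  unfold Vhp
  field_simp

lemma mul_Vhp'_add_Vhp {m ρ : ℝ} (hρ : ρ ≠ 0) : ρ * Vhp' m ρ + Vhp m ρ = 3 * ρ ^ 2 + 1 := by
  unfold Vhp Vhp'
  field_simp
  ring

lemma Vhp_pos_of_root_lt {m ρp ρ : ℝ} (hρp : 0 < ρp) (hroot : ρp ^ 3 + ρp - 2 * m = 0)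
    (hρ : ρp < ρ) : 0 < Vhp m ρ := by
  have hρ0 : 0 < ρ := hρp.trans hρ
  have hcube : ρp ^ 3 < ρ ^ 3 := pow_lt_pow_left₀ hρ hρp.le three_ne_zero
  rw [Vhp_eq_div hρ0.ne']
  exact div_pos (by linarith) hρ0

lemma hpForm_of_root (c : ℝ) {m ρ : ℝ} (hρ : ρ ≠ 0) (hroot : ρ ^ 3 + ρ - 2 * m = 0) :
    hpForm c m ρ = 3 * ρ ^ 2 + 1 := by
  have hV : Vhp m ρ = 0 := by rw [Vhp_eq_div hρ, hroot, zero_div]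
  have hkey := mul_Vhp'_add_Vhp (m := m) hρ
  rw [hV] at hkey
  simp only [hpForm, hV, Real.sqrt_zero]
  linarith

lemma continuousAt_hpForm (c m : ℝ) {ρ : ℝ} (hρ : ρ ≠ 0) : ContinuousAt (hpForm c m) ρ := by
  have hV : ContinuousAt (Vhp m) ρ := by
    unfold Vhp
    fun_prop (disch := exact hρ)
  have hV' : ContinuousAt (Vhp' m) ρ := by
    unfold Vhp'
    fun_prop (disch := exact pow_ne_zero 2 hρ)
  unfold hpForm
  have hs : ContinuousAt (fun x => Real.sqrt (Vhp m x)) ρ := hV.sqrt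
  fun_prop

lemma betaHP_eq {m ρ : ℝ} (hρ : ρ ≠ 0) (hV : 0 < Vhp m ρ) :
    betaHP m ρ = -hpForm (-6) m ρ / (12 * ρ * Real.sqrt (Vhp m ρ)) := by
  unfold betaHP hpForm
  have hs : 0 < Real.sqrt (Vhp m ρ) := Real.sqrt_pos.2 hV
  have hs2 := Real.sq_sqrt hV.le
  generalize Real.sqrt (Vhp m ρ) = s at *
  rw [← hs2]
  field_simp
  ring

lemma one_sub_betaHP_eq {m ρ : ℝ} (hρ : ρ ≠ 0) (hV : 0 < Vhp m ρ) :
    1 - betaHP m ρ = hpForm 6 m ρ / (12 * ρ * Real.sqrt (Vhp m ρ)) := by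
  have hs := Real.sqrt_pos.2 hV
  rw [betaHP_eq hρ hV]
  field_simp
  unfold hpForm
  ring

lemma sq_thetaHP_add_eq {m ρ : ℝ} (hN : hpForm (-6) m ρ ≠ 0) :
    (thetaHP m ρ + -1 / Real.sqrt 3) ^ 2 =
      4 * (ρ * Vhp' m ρ - 2 * Vhp m ρ) ^ 2 / (3 * hpForm (-6) m ρ ^ 2) := by
  have h3 : Real.sqrt 3 ^ 2 = 3 := Real.sq_sqrt (by norm_num)
  have hsum : thetaHP m ρ + -1 / Real.sqrt 3 =
      2 * (ρ * Vhp' m ρ - 2 * Vhp m ρ) / (Real.sqrt 3 * hpForm (-6) m ρ) := by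
    have hden : 4 * Vhp m ρ + ρ * Vhp' m ρ - 6 * ρ * Real.sqrt (Vhp m ρ) = hpForm (-6) m ρ := by
      unfold hpForm; ring
    rw [thetaHP, hden]
    field_simp
    rw [h3]
    unfold hpForm
    ring
  rw [hsum, div_pow, mul_pow, mul_pow, h3]
  ring

lemma sq_eq_hpForm_mul_hpForm {m ρ : ℝ} (hρ : ρ ≠ 0) (hV : 0 ≤ Vhp m ρ) :
    (ρ * Vhp' m ρ - 2 * Vhp m ρ) ^ 2 = hpForm (-6) m ρ * hpForm 6 m ρ - 12 * Vhp m ρ := by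
  have hs2 := Real.sq_sqrt hV
  have hkey := mul_Vhp'_add_Vhp (m := m) hρ
  unfold hpForm
  linear_combination (36 * ρ ^ 2) * hs2 - 12 * Vhp m ρ * hkey

lemma hpForm_pos {c m ρ : ℝ} (hc : 0 ≤ c) (hρ : 0 < ρ) (hV : 0 ≤ Vhp m ρ) : 0 < hpForm c m ρ := by
  have hkey := mul_Vhp'_add_Vhp (m := m) hρ.ne'
  have : 0 ≤ c * ρ * Real.sqrt (Vhp m ρ) := by positivity
  unfold hpForm
  linarith [sq_nonneg ρ]

lemma betaHP_sq_mul_eq {m ρ : ℝ} (hρ : 0 < ρ) (hV : 0 < Vhp m ρ) (hN : hpForm (-6) m ρ ≠ 0) :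
    betaHP m ρ ^ 2 *
        (4 / 3 + (thetaHP m ρ + (-1 / Real.sqrt 3)) ^ 2 * betaHP m ρ / (1 - betaHP m ρ)) =
      hpForm (-6) m ρ / (9 * ρ ^ 2 * hpForm 6 m ρ) := by
  have hs := Real.sqrt_pos.2 hV
  have hs2 := Real.sq_sqrt hV.le
  have hM := hpForm_pos (c := 6) (by norm_num) hρ hV.le
  rw [sq_thetaHP_add_eq hN, one_sub_betaHP_eq hρ.ne' hV, betaHP_eq hρ.ne' hV,
    sq_eq_hpForm_mul_hpForm hρ.ne' hV.le]
  field_simp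
  simp only [hs2]
  ring

theorem e2lambda_over_alpha_sq_limit_general (m : ℝ) (ρp : ℝ)
    (hρp : 0 < ρp ∧ ρp ^ 3 + ρp - 2 * m = 0) :
    Filter.Tendsto
      (fun ρ : ℝ => (betaHP m ρ) ^ 2 *
        (4 / 3 + (thetaHP m ρ + (-1 / Real.sqrt 3)) ^ 2 * betaHP m ρ / (1 - betaHP m ρ)))
      (nhdsWithin ρp (Set.Ioi ρp)) (nhds (1 / (9 * ρp ^ 2))) := by
  obtain ⟨hpos, hroot⟩ := hρp
  have hN := hpForm_of_root (-6) hpos.ne' hroot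
  have hM := hpForm_of_root 6 hpos.ne' hroot
  have hlim : Tendsto (fun ρ => hpForm (-6) m ρ / (9 * ρ ^ 2 * hpForm 6 m ρ)) (𝓝 ρp)
      (𝓝 (1 / (9 * ρp ^ 2))) := by
    have hcont : ContinuousAt (fun ρ => hpForm (-6) m ρ / (9 * ρ ^ 2 * hpForm 6 m ρ)) ρp := by
      have := continuousAt_hpForm (-6) m hpos.ne'
      have := continuousAt_hpForm 6 m hpos.ne'
      fun_prop (disch := simp only [hM]; positivity)
    convert hcont.tendsto using 2
    simp only [hN, hM]
    field_simp
  have hNne : ∀ᶠ ρ in 𝓝 ρp, hpForm (-6) m ρ ≠ 0 :=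
    (continuousAt_hpForm (-6) m hpos.ne').eventually_ne (by rw [hN]; positivity)
  refine (hlim.mono_left nhdsWithin_le_nhds).congr' ?_
  filter_upwards [nhdsWithin_le_nhds hNne, self_mem_nhdsWithin] with ρ hρN hρ
  exact (betaHP_sq_mul_eq (hpos.trans hρ) (Vhp_pos_of_root_lt hpos hroot hρ) hρN).symm

/-- For every `m > 0`, with `k = −1/√3`,
`lim_{ρ→ρ₊(m)⁺} β_m(ρ)²·(4/3 + (θ_m(ρ) + k)²·β_m(ρ)/(1 − β_m(ρ))) = 1/(9·ρ₊(m)²)`;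
in the paper's notation, `lim e^{2λ}/α² = 1/(9ρ₊²)` at the regular center. -/
theorem e2lambda_over_alpha_sq_limit (m : ℝ) (hm : 0 < m) (ρp : ℝ)
    (hρp : 0 < ρp ∧ ρp ^ 3 + ρp - 2 * m = 0) :
    Filter.Tendsto
      (fun ρ : ℝ => (betaHP m ρ) ^ 2 *
        (4 / 3 + (thetaHP m ρ + (-1 / Real.sqrt 3)) ^ 2 * betaHP m ρ / (1 - betaHP m ρ)))
      (nhdsWithin ρp (Set.Ioi ρp)) (nhds (1 / (9 * ρp ^ 2))) :=
  e2lambda_over_alpha_sq_limit_general m ρp hρp
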